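/- Being identical is an equivalence relation on pairwise disjoint vertex sets: if C_1, C_2, C_3 are pairwise disjoint subsets of a k-terminal graph G, C_1 is identical to C_2, and C_2 is identical to C_3, then C_1 is identical to C_3. -/
import Mathlib


/-- Two disjoint vertex sets `C₁, C₂` of a `k`-terminal graph are identical if some
terminal-respecting automorphism of `G` maps `C₁` onto `C₂` and `C₂` onto `C₁` and
fixes every vertex outside `C₁ ∪ C₂`. -/
def Identical {V : Type*} {k : ℕ} (G : SimpleGraph V) (T : Fin k → V)
    (C₁ C₂ : Set V) : Prop :=
  ∃ f : V ≃ V, (∀ u w : V, G.Adj u w ↔ G.Adj (f u) (f w)) ∧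
    (∀ i : Fin k, f (T i) = T i) ∧
    (∀ v ∈ C₁, f v ∈ C₂) ∧ (∀ v ∈ C₂, f v ∈ C₁) ∧
    (∀ v : V, v ∉ C₁ ∪ C₂ → f v = v)

/-- Being identical is transitive on pairwise disjoint vertex sets: if `C₁` is
identical to `C₂` and `C₂` is identical to `C₃`, then `C₁` is identical to `C₃`. -/
theorem identical_trans {V : Type*} {k : ℕ} (G : SimpleGraph V) (T : Fin k → V)
    (C₁ C₂ C₃ : Set V)
    (h12 : Disjoint C₁ C₂) (h23 : Disjoint C₂ C₃) (h13 : Disjoint C₁ C₃)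
    (hI12 : Identical G T C₁ C₂) (hI23 : Identical G T C₂ C₃) :
    Identical G T C₁ C₃ := by
  obtain ⟨f, hfA, hfT, hf12, hf21, hfO⟩ := hI12
  obtain ⟨g, hgA, hgT, hg23, hg32, hgO⟩ := hI23
  -- facts about f.symm
  have hs12 : ∀ v ∈ C₁, f.symm v ∈ C₂ := by
    intro v hv
    by_contra h2
    rcases em (f.symm v ∈ C₁) with h1 | h1
    · have h' := hf12 _ h1
      rw [Equiv.apply_symm_apply] at h'
      exact Set.disjoint_left.mp h12 hv h'
    · have h' := hfO (f.symm v) (by simp [h1, h2])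
      rw [Equiv.apply_symm_apply] at h'
      exact h1 (h' ▸ hv)
  have hs21 : ∀ v ∈ C₂, f.symm v ∈ C₁ := by
    intro v hv
    by_contra h1
    rcases em (f.symm v ∈ C₂) with h2 | h2
    · have h' := hf21 _ h2
      rw [Equiv.apply_symm_apply] at h'
      exact Set.disjoint_left.mp h12 h' hv
    · have h' := hfO (f.symm v) (by simp [h1, h2])
      rw [Equiv.apply_symm_apply] at h'
      exact h2 (h' ▸ hv)
  have hsO : ∀ v, v ∉ C₁ ∪ C₂ → f.symm v = v := by
    intro v hv
    simp only [Set.mem_union, not_or] at hv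
    rcases em (f.symm v ∈ C₁) with h1 | h1
    · have h' := hf12 _ h1
      rw [Equiv.apply_symm_apply] at h'
      exact absurd h' hv.2
    rcases em (f.symm v ∈ C₂) with h2 | h2
    · have h' := hf21 _ h2
      rw [Equiv.apply_symm_apply] at h'
      exact absurd h' hv.1
    · have h' := hfO (f.symm v) (by simp [h1, h2])
      rw [Equiv.apply_symm_apply] at h'
      exact h'.symm
  refine ⟨(f.symm.trans g).trans f, ?_, ?_, ?_, ?_, ?_⟩
  · intro u w
    simp only [Equiv.trans_apply]
    have h1 : G.Adj u w ↔ G.Adj (f.symm u) (f.symm w) := by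
      rw [hfA (f.symm u) (f.symm w), Equiv.apply_symm_apply, Equiv.apply_symm_apply]
    rw [h1, hgA, hfA]
  · intro i
    have hT : f.symm (T i) = T i := by
      conv_lhs => rw [← hfT i]
      exact f.symm_apply_apply _
    simp only [Equiv.trans_apply, hT, hgT, hfT]
  · intro v hv
    simp only [Equiv.trans_apply]
    have h2 : f.symm v ∈ C₂ := hs12 v hv
    have h3 : g (f.symm v) ∈ C₃ := hg23 _ h2
    have : f (g (f.symm v)) = g (f.symm v) := by
      apply hfO
      simp only [Set.mem_union, not_or]
      exact ⟨Set.disjoint_right.mp h13 h3, Set.disjoint_right.mp h23 h3⟩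
    rwa [this]
  · intro v hv
    simp only [Equiv.trans_apply]
    have h1 : f.symm v = v := by
      apply hsO
      simp only [Set.mem_union, not_or]
      exact ⟨Set.disjoint_right.mp h13 hv, Set.disjoint_right.mp h23 hv⟩
    rw [h1]
    have h2 : g v ∈ C₂ := hg32 v hv
    exact hf21 _ h2
  · intro v hv
    simp only [Set.mem_union, not_or] at hv
    simp only [Equiv.trans_apply]
    rcases em (v ∈ C₂) with h2 | h2
    · have h1 : f.symm v ∈ C₁ := hs21 v h2
      have hg1 : g (f.symm v) = f.symm v := by
        apply hgO
        simp only [Set.mem_union, not_or]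
        exact ⟨Set.disjoint_left.mp h12 h1, Set.disjoint_left.mp h13 h1⟩
      rw [hg1, Equiv.apply_symm_apply]
    · have h1 : f.symm v = v := hsO v (by simp [hv.1, h2])
      rw [h1]
      have hg1 : g v = v := hgO v (by simp [h2, hv.2])
      rw [hg1]
      exact hfO v (by simp [hv.1, h2])
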